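/- arXiv:1802.01137 — 3 statements merged into one kernel-verified Lean document; each statement's English description precedes it below -/
import Mathlib

section
/- Let a ∈ (0,1], let ⟨α_n : n < ω⟩ be a strictly increasing sequence of countable ordinals, and let ⟨B_i : i < ω₁⟩ be a sequence with B_i ⊆ i for each i < ω₁. Suppose K ∈ ℕ and for each k < K there is u_k ⊆ ω such that: (i) liminf_n |u_k ∩ n|/n ≥ a; (ii) for all m < n in u_k, B_{α_m} = B_{α_n} ∩ α_m; and the sets A_k = ⋃_{n ∈ u_k} B_{α_n} (k < K) are pairwise distinct. Then K · a ≤ 1. -/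
open Filter Set

noncomputable def omega1 : Ordinal.{0} := (Cardinal.aleph 1).ord

/-- The set of countable limit ordinals, `Lim(ω₁)`. -/
def limOmega1 : Set Ordinal.{0} := {δ | δ < omega1 ∧ Order.IsSuccLimit δ}

/-- `C` is a closed unbounded subset of `ω₁`. -/
def IsClubIn (C : Set Ordinal.{0}) : Prop :=
  C ⊆ Set.Iio omega1 ∧
  (∀ δ, δ < omega1 → Order.IsSuccLimit δ → (∀ β < δ, ∃ γ ∈ C, β < γ ∧ γ < δ) → δ ∈ C) ∧
  (∀ β, β < omega1 → ∃ γ ∈ C, β < γ)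

/-- `S` is a stationary subset of `ω₁`. -/
def IsStatIn (S : Set Ordinal.{0}) : Prop :=
  S ⊆ Set.Iio omega1 ∧ ∀ C, IsClubIn C → (S ∩ C).Nonempty

open scoped Classical in
/-- `|{k < n : α k ∈ A}| / n` as a real number. -/
noncomputable def hitRatio (α : ℕ → Ordinal.{0}) (A : Set Ordinal.{0}) (n : ℕ) : ℝ :=
  ((Finset.range n).filter (fun k => α k ∈ A)).card / n

/-- `α` assigns to each `δ ∈ S` a strictly increasing sequence cofinal in `δ`. -/
def GoodSeq (S : Set Ordinal.{0}) (α : Ordinal.{0} → ℕ → Ordinal.{0}) : Prop :=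
  ∀ δ ∈ S, StrictMono (α δ) ∧ (∀ n, α δ n < δ) ∧ (∀ β < δ, ∃ n, β < α δ n)

/-- The principle `♣_S^{inf ≥ a}`. -/
def ClubSuitInf (S : Set Ordinal.{0}) (a : ℝ) : Prop :=
  ∃ α : Ordinal.{0} → ℕ → Ordinal.{0}, GoodSeq S α ∧
    ∀ A : Set Ordinal.{0}, A ⊆ Set.Iio omega1 → ¬ A.Countable →
      ∃ δ ∈ S, a ≤ Filter.liminf (hitRatio (α δ) A) Filter.atTop

/-- The principle `♣_S^{sup ≥ a}`. -/
def ClubSuitSup (S : Set Ordinal.{0}) (a : ℝ) : Prop :=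
  ∃ α : Ordinal.{0} → ℕ → Ordinal.{0}, GoodSeq S α ∧
    ∀ A : Set Ordinal.{0}, A ⊆ Set.Iio omega1 → ¬ A.Countable →
      ∃ δ ∈ S, a ≤ Filter.limsup (hitRatio (α δ) A) Filter.atTop

/-- The diamond principle `◊` on `ω₁`. -/
def DiamondOmega1 : Prop :=
  ∃ B : Ordinal.{0} → Set Ordinal.{0}, (∀ δ ∈ limOmega1, B δ ⊆ Set.Iio δ) ∧
    ∀ A : Set Ordinal.{0}, A ⊆ Set.Iio omega1 →
      IsStatIn {δ ∈ limOmega1 | A ∩ Set.Iio δ = B δ}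

open scoped Classical in
/-- `|u ∩ n| / n` as a real number, for `u ⊆ ℕ`. -/
noncomputable def natRatio (u : Set ℕ) (n : ℕ) : ℝ :=
  ((Finset.range n).filter (fun k => k ∈ u)).card / n


/-! Coherence makes `n ↦ B (α n)` monotone along each `u k`, so if `u k ∩ u l` were infinite the
unions `A_k` and `A_l` would coincide; hence the `u k` are pairwise almost disjoint. Outside the
finitely many points lying in two of them they are disjoint, so `∑ₖ |u k ∩ n| ≤ n + C` for a
constant `C`; dividing by `n` and passing to the liminf gives `K · a ≤ 1`. -/

open scoped Finset Topology

theorem biUnion_subset_biUnion_of_infinite_inter {ι β : Type*} [LinearOrder ι]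
    [LocallyFiniteOrderBot ι] {f : ι → Set β} {u v : Set ι}
    (hf : ∀ m ∈ u, ∀ n ∈ u, m < n → f m ⊆ f n) (huv : (u ∩ v).Infinite) :
    ⋃ n ∈ u, f n ⊆ ⋃ n ∈ v, f n := by
  refine iUnion₂_subset fun m hm => ?_
  obtain ⟨n, ⟨hnu, hnv⟩, hmn⟩ := huv.exists_gt m
  exact (hf m hm n hnu hmn).trans (subset_biUnion_of_mem hnv)

theorem finite_inter_of_biUnion_ne {ι β : Type*} [LinearOrder ι]
    [LocallyFiniteOrderBot ι] {f : ι → Set β} {u v : Set ι}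
    (hu : ∀ m ∈ u, ∀ n ∈ u, m < n → f m ⊆ f n) (hv : ∀ m ∈ v, ∀ n ∈ v, m < n → f m ⊆ f n)
    (hne : ⋃ n ∈ u, f n ≠ ⋃ n ∈ v, f n) : (u ∩ v).Finite := by
  by_contra huv
  exact hne <| (biUnion_subset_biUnion_of_infinite_inter hu huv).antisymm
    (biUnion_subset_biUnion_of_infinite_inter hv (inter_comm u v ▸ huv))

theorem exists_sum_card_filter_mem_le {ι α : Type*} {s : Finset ι}
    {u : ι → Set α} [∀ k, DecidablePred (· ∈ u k)]
    (hu : (s : Set ι).Pairwise fun k l => (u k ∩ u l).Finite) :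
    ∃ C : ℕ, ∀ t : Finset α, ∑ k ∈ s, #{x ∈ t | x ∈ u k} ≤ #t + C := by
  classical
  set F : Set α := ⋃ k ∈ s, ⋃ l ∈ s, ⋃ (_ : k ≠ l), u k ∩ u l
  have hF : F.Finite :=
    (s.finite_toSet.biUnion fun k hk => s.finite_toSet.biUnion fun l hl =>
      finite_iUnion fun hkl => hu hk hl hkl)
  refine ⟨#s * #hF.toFinset, fun t => ?_⟩
  have hsplit (k : ι) : #{x ∈ t | x ∈ u k} ≤ #{x ∈ t | x ∈ u k \ F} + #hF.toFinset := by
    refine (Finset.card_le_card fun x hx => ?_).trans (Finset.card_union_le _ _)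
    by_cases hxF : x ∈ F <;> simp_all
  have hdisj : (s : Set ι).PairwiseDisjoint fun k => {x ∈ t | x ∈ u k \ F} := by
    intro k hk l hl hkl
    refine Finset.disjoint_left.2 fun x hxk hxl => ?_
    simp only [Finset.mem_filter, Set.mem_sdiff] at hxk hxl
    exact hxk.2.2 (mem_biUnion hk (mem_biUnion hl (mem_iUnion_of_mem hkl ⟨hxk.2.1, hxl.2.1⟩)))
  calc ∑ k ∈ s, #{x ∈ t | x ∈ u k}
      ≤ ∑ k ∈ s, (#{x ∈ t | x ∈ u k \ F} + #hF.toFinset) :=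
        Finset.sum_le_sum fun k _ => hsplit k
    _ = #(s.biUnion fun k => {x ∈ t | x ∈ u k \ F}) + #s * #hF.toFinset := by
      rw [Finset.sum_add_distrib, Finset.card_biUnion hdisj, Finset.sum_const, smul_eq_mul]
    _ ≤ #t + #s * #hF.toFinset := by
      gcongr
      exact Finset.biUnion_subset.2 fun k _ => Finset.filter_subset _ _

theorem card_mul_le_of_le_liminf {ι γ : Type*} {l : Filter γ} [l.NeBot] {s : Finset ι}
    {r : ι → γ → ℝ} {g : γ → ℝ} {a L : ℝ}
    (hbdd : ∀ k ∈ s, IsBoundedUnder (· ≥ ·) l (r k)) (ha : ∀ k ∈ s, a ≤ liminf (r k) l)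
    (hsum : ∀ᶠ n in l, ∑ k ∈ s, r k n ≤ g n) (hg : Tendsto g l (𝓝 L)) :
    #s * a ≤ L := by
  have hb : ∀ b < a, #s * b ≤ L := by
    intro b hb
    have hlt : ∀ᶠ n in l, ∀ k ∈ s, b < r k n :=
      (Filter.eventually_all_finset s).2 fun k hk =>
        eventually_lt_of_lt_liminf (hb.trans_le (ha k hk)) (hbdd k hk)
    refine ge_of_tendsto hg ((hlt.and hsum).mono fun n ⟨hlt, hsum⟩ => ?_)
    calc (#s : ℝ) * b = ∑ k ∈ s, b := by simp
      _ ≤ ∑ k ∈ s, r k n := Finset.sum_le_sum fun k hk => (hlt k hk).le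
      _ ≤ g n := hsum
  have hcont : Tendsto (fun b => (#s : ℝ) * b) (𝓝[<] a) (𝓝 (#s * a)) :=
    ((continuous_const_mul _).tendsto a).mono_left nhdsWithin_le_nhds
  exact le_of_tendsto hcont (eventually_nhdsWithin_of_forall hb)

theorem natRatio_nonneg (u : Set ℕ) (n : ℕ) : 0 ≤ natRatio u n := by
  unfold natRatio
  positivity

open scoped Classical in
theorem sum_natRatio_le {ι : Type*} {s : Finset ι} {u : ι → Set ℕ} {C : ℕ}
    (hC : ∀ n, ∑ k ∈ s, #{x ∈ Finset.range n | x ∈ u k} ≤ n + C) (n : ℕ) :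
    ∑ k ∈ s, natRatio (u k) n ≤ 1 + C / n := by
  rcases n.eq_zero_or_pos with rfl | hn
  · simp [natRatio]
  simp only [natRatio, ← Finset.sum_div]
  rw [div_le_iff₀ (by positivity), add_mul, one_mul, div_mul_cancel₀ _ (by positivity)]
  exact_mod_cast hC n

theorem card_le_of_density_general (a : ℝ)
    (α : ℕ → Ordinal.{0})
    (B : Ordinal.{0} → Set Ordinal.{0})
    (K : ℕ) (u : ℕ → Set ℕ)
    (hdens : ∀ k, k < K → a ≤ Filter.liminf (natRatio (u k)) Filter.atTop)
    (hcoh : ∀ k, k < K → ∀ m ∈ u k, ∀ n ∈ u k, m < n →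
      B (α m) = B (α n) ∩ Set.Iio (α m))
    (hdist : ∀ k, k < K → ∀ l, l < K → k ≠ l →
      (⋃ n ∈ u k, B (α n)) ≠ (⋃ n ∈ u l, B (α n))) :
    (K : ℝ) * a ≤ 1 := by
  classical
  have hmono : ∀ k < K, ∀ m ∈ u k, ∀ n ∈ u k, m < n → B (α m) ⊆ B (α n) :=
    fun k hk m hm n hn hmn => (hcoh k hk m hm n hn hmn).trans_subset inter_subset_left
  have hfin : (Finset.range K : Set ℕ).Pairwise fun k l => (u k ∩ u l).Finite := by
    intro k hk l hl hkl
    rw [Finset.coe_range, mem_Iio] at hk hl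
    exact finite_inter_of_biUnion_ne (hmono k hk) (hmono l hl) (hdist k hk l hl hkl)
  obtain ⟨C, hC⟩ := exists_sum_card_filter_mem_le hfin
  have hlim : Tendsto (fun n : ℕ => 1 + (C : ℝ) / n) atTop (𝓝 1) := by
    simpa using tendsto_const_nhds.add (tendsto_const_div_atTop_nhds_zero_nat (C : ℝ))
  simpa using card_mul_le_of_le_liminf
    (fun k _ => isBoundedUnder_of ⟨0, natRatio_nonneg (u k)⟩)
    (fun k hk => hdens k (Finset.mem_range.1 hk))
    (Eventually.of_forall (sum_natRatio_le fun n => (hC _).trans_eq (by rw [Finset.card_range])))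
    hlim

/-- The counting argument in the proof of Theorem 1.2: if `⟨α_n : n < ω⟩` is a strictly
increasing sequence of countable ordinals, `B_i ⊆ i` for `i < ω₁`, and for each `k < K`
there is `u_k ⊆ ω` of lower density `≥ a` which is coherent along `B ∘ α`, and the
resulting sets `A_k = ⋃_{n ∈ u_k} B_{α_n}` are pairwise distinct, then `K · a ≤ 1`. -/
theorem card_le_of_density (a : ℝ) (ha0 : 0 < a) (ha1 : a ≤ 1)
    (α : ℕ → Ordinal.{0}) (hmono : StrictMono α) (hlt : ∀ n, α n < omega1)
    (B : Ordinal.{0} → Set Ordinal.{0}) (hB : ∀ i, i < omega1 → B i ⊆ Set.Iio i)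
    (K : ℕ) (u : ℕ → Set ℕ)
    (hdens : ∀ k, k < K → a ≤ Filter.liminf (natRatio (u k)) Filter.atTop)
    (hcoh : ∀ k, k < K → ∀ m ∈ u k, ∀ n ∈ u k, m < n →
      B (α m) = B (α n) ∩ Set.Iio (α m))
    (hdist : ∀ k, k < K → ∀ l, l < K → k ≠ l →
      (⋃ n ∈ u k, B (α n)) ≠ (⋃ n ∈ u l, B (α n))) :
    (K : ℝ) * a ≤ 1 :=
  card_le_of_density_general a α B K u hdens hcoh hdist
end

section
/- Let a₁, a₂ be real numbers with 0 < a₁ < a₂ < 1 and let K ≥ 1 be a natural number. Then for all sufficiently large N ∈ ℕ the following holds: for every M ∈ ℕ and every sequence ⟨W_k : k < N⟩ of nonempty intervals of natural numbers with |W_k| ≤ K for each k, W_k entirely below W_{k+1} for each k < N−1, and ⋃_{k<N} W_k = [0, M), there exists F ⊆ {0,1,…,N−1} such that (i) |F| ≥ N·a₁ and (ii) for every m ≤ M, |[0, m) ∩ ⋃_{k ∈ F} W_k| ≤ m·a₂. -/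
open Finset

-- ordering across non-adjacent intervals
lemma order_lt (N : ℕ) (W : ℕ → Finset ℕ)
    (hWne : ∀ k, k < N → (W k).Nonempty)
    (hsep : ∀ k, k + 1 < N → ∀ x ∈ W k, ∀ y ∈ W (k + 1), x < y) :
    ∀ j, j < N → ∀ i, i < j → ∀ x ∈ W i, ∀ y ∈ W j, x < y := by
  intro j
  induction j with
  | zero => omega
  | succ j ih =>
    intro hjN i hij x hx y hy
    rcases Nat.lt_succ_iff_lt_or_eq.mp hij with h | h
    · obtain ⟨z, hz⟩ := hWne j (by omega)
      exact (ih (by omega) i h x hx z hz).trans (hsep j hjN z hz y hy)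
    · subst h; exact hsep i hjN x hx y hy

-- selecting c elements of minimal weight
lemma select_small (w : ℕ → ℕ) : ∀ (c : ℕ) (B : Finset ℕ), c ≤ B.card →
    ∃ S, S ⊆ B ∧ S.card = c ∧ B.card * ∑ k ∈ S, w k ≤ c * ∑ k ∈ B, w k := by
  intro c
  induction c with
  | zero => exact fun B _ => ⟨∅, by simp, by simp, by simp⟩
  | succ c ih =>
    intro B hc
    obtain ⟨S, hSB, hScard, hSsum⟩ := ih B (by omega)
    have hne : (B \ S).Nonempty := by
      rw [← Finset.card_pos, Finset.card_sdiff_of_subset hSB]; omega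
    obtain ⟨x, hx, hxmin⟩ := Finset.exists_min_image (B \ S) w hne
    have hxS : x ∉ S := (Finset.mem_sdiff.mp hx).2
    have hxB : x ∈ B := (Finset.mem_sdiff.mp hx).1
    have hmin : (B \ S).card * w x ≤ ∑ k ∈ B \ S, w k := by
      calc (B \ S).card * w x = (B \ S).card • w x := by simp
      _ ≤ ∑ k ∈ B \ S, w k := Finset.card_nsmul_le_sum _ _ _ hxmin
    have hsplit : ∑ k ∈ B \ S, w k + ∑ k ∈ S, w k = ∑ k ∈ B, w k :=
      Finset.sum_sdiff hSB
    refine ⟨insert x S, Finset.insert_subset hxB hSB, ?_, ?_⟩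
    · rw [Finset.card_insert_of_notMem hxS, hScard]
    · rw [Finset.sum_insert hxS]
      have hd : (B \ S).card = B.card - c := by rw [Finset.card_sdiff_of_subset hSB, hScard]
      obtain ⟨d, hd2⟩ : ∃ d, B.card = c + d := ⟨B.card - c, by omega⟩
      have hd1 : 1 ≤ d := by omega
      set n := B.card
      set A := ∑ k ∈ S, w k
      set B' := ∑ k ∈ B \ S, w k
      have hdA : d * A ≤ c * B' := by
        have h := hSsum
        rw [← hsplit, Nat.mul_add, hd2, Nat.add_mul] at h
        omega
      have h1 : d * w x ≤ B' := by
        calc d * w x = (B \ S).card * w x := by rw [hd, hd2]; congr 1; omega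
        _ ≤ B' := hmin
      -- goal : n * (w x + A) ≤ (c+1) * (A + B')
      rw [hd2, ← hsplit]
      have key : d * ((c + d) * (w x + A)) ≤ d * ((c + 1) * (B' + A)) := by
        nlinarith [Nat.mul_le_mul_left (c + d) h1, Nat.mul_le_mul_left (d - 1) hdA,
          Nat.sub_add_cancel hd1]
      exact Nat.le_of_mul_le_mul_left key (by omega)

lemma struct (N M : ℕ) (W : ℕ → Finset ℕ)
    (hWI : ∀ k, k < N → ∃ i j : ℕ, i < j ∧ W k = Finset.Ico i j)
    (hsep : ∀ k, k + 1 < N → ∀ x ∈ W k, ∀ y ∈ W (k + 1), x < y)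
    (hU : (Finset.range N).biUnion W = Finset.range M) :
    ∀ k, k < N → W k = Finset.Ico (∑ i ∈ Finset.range k, (W i).card)
      (∑ i ∈ Finset.range (k + 1), (W i).card) := by
  have hWne : ∀ k, k < N → (W k).Nonempty := by
    intro k hk
    obtain ⟨i, j, hij, hW⟩ := hWI k hk
    rw [hW]; exact ⟨i, Finset.mem_Ico.mpr ⟨le_refl _, hij⟩⟩
  have horder := order_lt N W hWne hsep
  have hsubU : ∀ k, k < N → W k ⊆ Finset.range M := by
    intro k hk
    rw [← hU]
    exact Finset.subset_biUnion_of_mem W (Finset.mem_range.mpr hk)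
  intro k
  induction k with
  | zero =>
    intro hN
    obtain ⟨i, j, hij, hW⟩ := hWI 0 hN
    have hi0 : i = 0 := by
      by_contra hi
      -- 0 ∈ range M
      have hM : 0 < M := by
        obtain ⟨x, hx⟩ := hWne 0 hN
        have := hsubU 0 hN hx
        simp at this; omega
      have h0 : (0 : ℕ) ∈ (Finset.range N).biUnion W := by
        rw [hU]; exact Finset.mem_range.mpr hM
      obtain ⟨t, ht, h0t⟩ := Finset.mem_biUnion.mp h0
      rw [Finset.mem_range] at ht
      rcases Nat.eq_zero_or_pos t with h | h
      · subst h
        rw [hW, Finset.mem_Ico] at h0t; omega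
      · obtain ⟨x, hx⟩ := hWne 0 hN
        exact absurd (horder t ht 0 h x hx 0 h0t) (by omega)
    subst hi0
    simp [Finset.sum_range_one, hW, Nat.card_Ico]
  | succ k ih =>
    intro hN
    have hkN : k < N := by omega
    have hIH := ih hkN
    set Ek := ∑ i ∈ Finset.range k, (W i).card with hEk
    set Ek1 := ∑ i ∈ Finset.range (k + 1), (W i).card with hEk1
    have hEkk : Ek1 = Ek + (W k).card := by rw [hEk1, Finset.sum_range_succ]
    have hcardk : 1 ≤ (W k).card := Finset.card_pos.mpr (hWne k hkN)
    have hp : Ek1 - 1 ∈ W k := by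
      rw [hIH, Finset.mem_Ico]
      rw [hIH, Nat.card_Ico] at hcardk
      omega
    obtain ⟨i, j, hij, hW⟩ := hWI (k + 1) hN
    have hiW : i ∈ W (k + 1) := by rw [hW]; exact Finset.mem_Ico.mpr ⟨le_refl _, hij⟩
    have hle : Ek1 ≤ i := by
      have := hsep k hN _ hp _ hiW
      omega
    have hieq : i = Ek1 := by
      by_contra hne
      have hlt : Ek1 < i := by omega
      have hEM : Ek1 < M := by
        have := hsubU (k + 1) hN hiW
        rw [Finset.mem_range] at this; omega
      have h0 : Ek1 ∈ (Finset.range N).biUnion W := by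
        rw [hU]; exact Finset.mem_range.mpr hEM
      obtain ⟨t, ht, h0t⟩ := Finset.mem_biUnion.mp h0
      rw [Finset.mem_range] at ht
      rcases lt_trichotomy t (k + 1) with h | h | h
      · rcases Nat.lt_succ_iff_lt_or_eq.mp h with h' | h'
        · exact absurd (horder k hkN t h' _ h0t _ hp) (by omega)
        · subst h'
          rw [hIH, Finset.mem_Ico] at h0t; omega
      · subst h
        rw [hW, Finset.mem_Ico] at h0t; omega
      · exact absurd (horder t ht (k + 1) h _ hiW _ h0t) (by omega)
    have hcard : (W (k + 1)).card = j - Ek1 := by rw [hW, hieq, Nat.card_Ico]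
    have : ∑ i ∈ Finset.range (k + 2), (W i).card = Ek1 + (W (k + 1)).card := by
      rw [Finset.sum_range_succ]
    rw [this, hW, hieq]
    rw [Nat.card_Ico]
    congr 1
    omega

lemma blocksum (f : ℕ → ℕ) (r a : ℕ) : ∀ b, a ≤ b →
    ∑ j ∈ Finset.Ico a b, (∑ k ∈ Finset.Ico (j * r) ((j + 1) * r), f k)
      = ∑ k ∈ Finset.Ico (a * r) (b * r), f k := by
  intro b hab
  induction b, hab using Nat.le_induction with
  | base => simp
  | succ b hab ih =>

    rw [Finset.sum_Ico_succ_top hab, ih]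
    exact Finset.sum_Ico_consecutive f
      (Nat.mul_le_mul_right r hab) (Nat.mul_le_mul_right r (by omega))

/-- Lemma 8.7: for `0 < a₁ < a₂ < 1` and `K ≥ 1`, for all sufficiently large `N`:
whenever `⟨W_k : k < N⟩` is a sequence of nonempty intervals of natural numbers,
each of size at most `K`, with `W_k` entirely below `W_{k+1}`, whose union is `[0, M)`,
there is `F ⊆ {0, …, N-1}` with `|F| ≥ N·a₁` such that for every `m ≤ M`,
`|[0, m) ∩ ⋃_{k ∈ F} W_k| ≤ m·a₂`. -/
theorem interval_selection (a₁ a₂ : ℝ) (h1 : 0 < a₁) (h12 : a₁ < a₂) (h2 : a₂ < 1)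
    (K : ℕ) (hK : 1 ≤ K) :
    ∃ N₀ : ℕ, ∀ N : ℕ, N₀ ≤ N → ∀ M : ℕ, ∀ W : ℕ → Finset ℕ,
      (∀ k, k < N → ∃ i j : ℕ, i < j ∧ W k = Finset.Ico i j) →
      (∀ k, k < N → (W k).card ≤ K) →
      (∀ k, k + 1 < N → ∀ x ∈ W k, ∀ y ∈ W (k + 1), x < y) →
      (Finset.range N).biUnion W = Finset.range M →
      ∃ F : Finset ℕ, F ⊆ Finset.range N ∧
        (N : ℝ) * a₁ ≤ F.card ∧
        ∀ m : ℕ, m ≤ M →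
          ((Finset.range m ∩ F.biUnion W).card : ℝ) ≤ m * a₂ := by
  obtain ⟨r, hrgt⟩ := exists_nat_gt (max (1 / (a₂ - a₁)) (1 / a₂))
  have hd : (0:ℝ) < a₂ - a₁ := by linarith
  have ha₂ : (0:ℝ) < a₂ := by linarith
  have hr1 : 1 / (a₂ - a₁) < r := lt_of_le_of_lt (le_max_left _ _) hrgt
  have hr2 : 1 / a₂ < r := lt_of_le_of_lt (le_max_right _ _) hrgt
  have hrpos : (0:ℝ) < r := lt_trans (by positivity) hr2
  have hrpos' : 0 < r := by exact_mod_cast hrpos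
  have hda : (1:ℝ) < (a₂ - a₁) * r := by rw [div_lt_iff₀ hd] at hr1; linarith
  have ha2r : (1:ℝ) < a₂ * r := by rw [div_lt_iff₀ ha₂] at hr2; linarith
  set c := ⌊a₂ * (r:ℝ)⌋₊ with hcdef
  have hc2 : (c:ℝ) ≤ a₂ * r := Nat.floor_le (by positivity)
  have hc1r : a₂ * r - 1 < c := by
    have := Nat.lt_floor_add_one (a₂ * (r:ℝ)); linarith
  have hc3 : a₁ * r < c := by nlinarith
  have hcpos : (0:ℝ) < c := lt_trans (by positivity) hc3
  have hc1 : 1 ≤ c := by exact_mod_cast Nat.one_le_cast.mpr (by exact_mod_cast Nat.cast_pos.mp hcpos)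
  have hcr : c ≤ r := by
    have : (c:ℝ) < r := lt_of_le_of_lt hc2 (by nlinarith)
    exact_mod_cast this.le
  have hεpos : (0:ℝ) < c - a₁ * r := by linarith
  obtain ⟨N₁, hN₁⟩ := exists_nat_gt ((r * c * (K + 1) : ℝ) / (c - a₁ * r))
  refine ⟨max ((K + 1) * r) N₁, ?_⟩
  intro N hN M W hWI hWK hsep hU
  have hNr : (K + 1) * r ≤ N := le_trans (le_max_left _ _) hN
  have hNN₁ : (N₁:ℝ) ≤ N := by exact_mod_cast le_trans (le_max_right _ _) hN
  have hNbig : (r * c * (K + 1) : ℝ) < (c - a₁ * r) * N := by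
    rw [div_lt_iff₀ hεpos] at hN₁
    nlinarith
  set Q := N / r with hQdef
  have hQr : Q * r ≤ N := Nat.div_mul_le_self N r
  have hKQ : K + 1 ≤ Q := (Nat.le_div_iff_mul_le hrpos').mpr hNr
  -- structure of the intervals
  have hWne : ∀ k, k < N → (W k).Nonempty := by
    intro k hk
    obtain ⟨i, j, hij, hW⟩ := hWI k hk
    rw [hW]; exact ⟨i, Finset.mem_Ico.mpr ⟨le_refl _, hij⟩⟩
  have hcard1 : ∀ k, k < N → 1 ≤ (W k).card := fun k hk => Finset.card_pos.mpr (hWne k hk)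
  have hE := struct N M W hWI hsep hU
  have hE' : ∀ k, k < N → W k = Finset.Ico (∑ i ∈ Finset.range k, (W i).card)
      (∑ i ∈ Finset.range (k + 1), (W i).card) := hE
  have hEmono : ∀ a b : ℕ, a ≤ b →
      (∑ i ∈ Finset.range a, (W i).card) ≤ ∑ i ∈ Finset.range b, (W i).card :=
    fun a b h => Finset.sum_le_sum_of_subset (Finset.range_subset_range.mpr h)
  -- per-block selection
  have hsel : ∀ j : ℕ, ∃ S, S ⊆ Finset.Ico (j * r) ((j + 1) * r) ∧ S.card = c ∧
      r * ∑ k ∈ S, (W k).card ≤ c * ∑ k ∈ Finset.Ico (j * r) ((j + 1) * r), (W k).card := by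
    intro j
    have hcard : (Finset.Ico (j * r) ((j + 1) * r)).card = r := by
      rw [Nat.card_Ico]
      have : (j + 1) * r = j * r + r := by ring
      omega
    obtain ⟨S, h1, h2, h3⟩ := select_small (fun k => (W k).card) c _
      (by rw [hcard]; exact hcr)
    exact ⟨S, h1, h2, by rwa [hcard] at h3⟩
  choose S hS1 hS2 hS3 using hsel
  set F := (Finset.Ico K Q).biUnion S with hF
  have hSsub : ∀ j, ∀ k ∈ S j, j * r ≤ k ∧ k < (j + 1) * r :=
    fun j k hk => Finset.mem_Ico.mp (hS1 j hk)
  have hdisj : ∀ i ∈ (Finset.Ico K Q), ∀ j ∈ (Finset.Ico K Q), i ≠ j →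
      Disjoint (S i) (S j) := by
    intro i _ j _ hij
    refine Finset.disjoint_left.mpr ?_
    intro k hki hkj
    have h1 := hSsub i k hki
    have h2 := hSsub j k hkj
    rcases lt_or_gt_of_ne hij with h | h
    · have : (i + 1) * r ≤ j * r := Nat.mul_le_mul_right r (by omega)
      omega
    · have : (j + 1) * r ≤ i * r := Nat.mul_le_mul_right r (by omega)
      omega
  have hFcard : F.card = (Q - K) * c := by
    rw [hF, Finset.card_biUnion hdisj,
      Finset.sum_congr rfl (fun j _ => hS2 j), Finset.sum_const, Nat.card_Ico,
      smul_eq_mul]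
  have hFsub : F ⊆ Finset.range N := by
    intro k hk
    obtain ⟨j, hj, hkS⟩ := Finset.mem_biUnion.mp hk
    rw [Finset.mem_Ico] at hj
    have h2 := (hSsub j k hkS).2
    have h3 : (j + 1) * r ≤ Q * r := Nat.mul_le_mul_right r (by omega)
    rw [Finset.mem_range]
    omega
  refine ⟨F, hFsub, ?_, ?_⟩
  · -- cardinality lower bound
    rw [hFcard]
    have hQK : ((Q - K : ℕ) : ℝ) = (Q : ℝ) - K := by
      rw [Nat.cast_sub (by omega)]
    have hQub : (N : ℝ) < ((Q : ℝ) + 1) * r := by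
      have h : r * Q + N % r = N := Nat.div_add_mod N r
      have h2 : N % r < r := Nat.mod_lt _ hrpos'
      have h3 : N < (Q + 1) * r := by
        calc N = r * Q + N % r := h.symm
          _ < r * Q + r := by omega
          _ = (Q + 1) * r := by ring
      exact_mod_cast h3
    rw [Nat.cast_mul, hQK]
    nlinarith [hNbig, mul_lt_mul_of_pos_right hQub hcpos, hrpos, hcpos]
  · -- prefix counting bound
    intro m hm
    have hbU : F.biUnion W = (Finset.Ico K Q).biUnion (fun j => (S j).biUnion W) :=
      Finset.biUnion_biUnion _ _ _
    have hsub1 : Finset.range m ∩ F.biUnion W ⊆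
        (Finset.Ico K Q).biUnion (fun j => Finset.range m ∩ (S j).biUnion W) := by
      intro x hx
      obtain ⟨hxm, hxb⟩ := Finset.mem_inter.mp hx
      rw [hbU] at hxb
      obtain ⟨j, hj, hxj⟩ := Finset.mem_biUnion.mp hxb
      exact Finset.mem_biUnion.mpr ⟨j, hj, Finset.mem_inter.mpr ⟨hxm, hxj⟩⟩
    have hcount : (Finset.range m ∩ F.biUnion W).card ≤
        ∑ j ∈ Finset.Ico K Q, (Finset.range m ∩ (S j).biUnion W).card :=
      le_trans (Finset.card_le_card hsub1) Finset.card_biUnion_le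
    have hWk : ∀ j, j < Q → ∀ k ∈ S j, k < N := by
      intro j hj k hk
      have h2 := (hSsub j k hk).2
      have h3 : (j + 1) * r ≤ Q * r := Nat.mul_le_mul_right r (by omega)
      omega
    have hzero : ∀ j, K ≤ j → j < Q → m ≤ (∑ i ∈ Finset.range (j * r), (W i).card) →
        Finset.range m ∩ (S j).biUnion W = ∅ := by
      intro j hjK hjQ hmE
      rw [Finset.eq_empty_iff_forall_notMem]
      intro x hx
      obtain ⟨hxm, hxb⟩ := Finset.mem_inter.mp hx
      obtain ⟨k, hk, hxk⟩ := Finset.mem_biUnion.mp hxb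
      have hkN := hWk j hjQ k hk
      rw [hE' k hkN, Finset.mem_Ico] at hxk
      have hmono := hEmono (j * r) k (hSsub j k hk).1
      rw [Finset.mem_range] at hxm
      omega
    set T := (Finset.Ico K Q).filter
      (fun j => (∑ i ∈ Finset.range (j * r), (W i).card) < m) with hT
    have hsumT : ∑ j ∈ Finset.Ico K Q, (Finset.range m ∩ (S j).biUnion W).card =
        ∑ j ∈ T, (Finset.range m ∩ (S j).biUnion W).card := by
      symm
      apply Finset.sum_subset (Finset.filter_subset _ _)
      intro j hj hjT
      have hj' := Finset.mem_Ico.mp hj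
      have hnot : ¬ ((∑ i ∈ Finset.range (j * r), (W i).card) < m) := by
        intro h; exact hjT (Finset.mem_filter.mpr ⟨hj, h⟩)
      rw [hzero j hj'.1 hj'.2 (by omega)]; simp
    rcases Finset.eq_empty_or_nonempty T with hTe | hTne
    · have h0 : (Finset.range m ∩ F.biUnion W).card = 0 := by
        have hc' := hcount
        rw [hsumT, hTe, Finset.sum_empty] at hc'
        omega
      have hpos : (0:ℝ) ≤ (m:ℝ) * a₂ := by positivity
      rw [h0]
      simpa using hpos
    · set j₀ := T.max' hTne with hj₀
      have hj₀T : j₀ ∈ T := T.max'_mem hTne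
      obtain ⟨hj₀Ico, hj₀E⟩ := Finset.mem_filter.mp hj₀T
      rw [Finset.mem_Ico] at hj₀Ico
      have hTsub : T ⊆ Finset.Ico K (j₀ + 1) := by
        intro j hj
        have ha := (Finset.mem_Ico.mp (Finset.mem_filter.mp hj).1).1
        have hb := T.le_max' j hj
        rw [Finset.mem_Ico]; omega
      have hterm : ∀ j, (Finset.range m ∩ (S j).biUnion W).card ≤
          ∑ k ∈ S j, (W k).card := by
        intro j
        calc (Finset.range m ∩ (S j).biUnion W).card
            ≤ ((S j).biUnion W).card := Finset.card_le_card Finset.inter_subset_right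
          _ ≤ ∑ k ∈ S j, (W k).card := Finset.card_biUnion_le
      have hchain1 : ∑ j ∈ T, (Finset.range m ∩ (S j).biUnion W).card ≤
          ∑ j ∈ Finset.Ico K (j₀ + 1), ∑ k ∈ S j, (W k).card :=
        le_trans (Finset.sum_le_sum (fun j _ => hterm j))
          (Finset.sum_le_sum_of_subset hTsub)
      have hchain2 : r * ∑ j ∈ Finset.Ico K (j₀ + 1), ∑ k ∈ S j, (W k).card ≤
          c * ∑ k ∈ Finset.Ico (K * r) ((j₀ + 1) * r), (W k).card := by
        rw [← blocksum (fun k => (W k).card) r K (j₀ + 1) (by omega),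
          Finset.mul_sum, Finset.mul_sum]
        exact Finset.sum_le_sum (fun j _ => hS3 j)
      have hXm : ∑ k ∈ Finset.Ico (K * r) ((j₀ + 1) * r), (W k).card ≤ m := by
        have e1 : K * r ≤ j₀ * r := Nat.mul_le_mul_right r hj₀Ico.1
        have e2 : j₀ * r ≤ (j₀ + 1) * r := Nat.mul_le_mul_right r (by omega)
        have hsplit : ∑ k ∈ Finset.Ico (K * r) (j₀ * r), (W k).card
            + ∑ k ∈ Finset.Ico (j₀ * r) ((j₀ + 1) * r), (W k).card
            = ∑ k ∈ Finset.Ico (K * r) ((j₀ + 1) * r), (W k).card :=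
          Finset.sum_Ico_consecutive _ e1 e2
        have hlow : K * r ≤ ∑ i ∈ Finset.range (K * r), (W i).card := by
          have hall : ∀ k ∈ Finset.range (K * r), 1 ≤ (W k).card := by
            intro k hk
            rw [Finset.mem_range] at hk
            have : K * r ≤ (K + 1) * r := Nat.mul_le_mul_right r (by omega)
            exact hcard1 k (by omega)
          calc K * r = (Finset.range (K * r)).card • 1 := by simp
            _ ≤ ∑ k ∈ Finset.range (K * r), (W k).card :=
              Finset.card_nsmul_le_sum _ _ _ hall
        have hEsplit : (∑ i ∈ Finset.range (K * r), (W i).card)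
            + ∑ k ∈ Finset.Ico (K * r) (j₀ * r), (W k).card
            = ∑ i ∈ Finset.range (j₀ * r), (W i).card := by
          simp only [Finset.range_eq_Ico]
          exact Finset.sum_Ico_consecutive _ (Nat.zero_le _) e1
        have hup : ∑ k ∈ Finset.Ico (j₀ * r) ((j₀ + 1) * r), (W k).card ≤ r * K := by
          have hall : ∀ k ∈ Finset.Ico (j₀ * r) ((j₀ + 1) * r), (W k).card ≤ K := by
            intro k hk
            rw [Finset.mem_Ico] at hk
            have h3 : (j₀ + 1) * r ≤ Q * r := Nat.mul_le_mul_right r (by omega)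
            exact hWK k (by omega)
          calc ∑ k ∈ Finset.Ico (j₀ * r) ((j₀ + 1) * r), (W k).card
              ≤ (Finset.Ico (j₀ * r) ((j₀ + 1) * r)).card • K :=
                Finset.sum_le_card_nsmul _ _ _ hall
            _ = r * K := by
                rw [Nat.card_Ico]
                have hrr : (j₀ + 1) * r - j₀ * r = r := by
                  have : (j₀ + 1) * r = j₀ * r + r := by ring
                  omega
                rw [hrr, smul_eq_mul]
        have hcomm : r * K = K * r := Nat.mul_comm r K
        have hj₀E' : (∑ i ∈ Finset.range (j₀ * r), (W i).card) < m := hj₀E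
        omega
      have hnat : r * (Finset.range m ∩ F.biUnion W).card ≤ c * m := by
        calc r * (Finset.range m ∩ F.biUnion W).card
            ≤ r * ∑ j ∈ Finset.Ico K (j₀ + 1), ∑ k ∈ S j, (W k).card :=
              Nat.mul_le_mul_left r (by omega)
          _ ≤ c * ∑ k ∈ Finset.Ico (K * r) ((j₀ + 1) * r), (W k).card := hchain2
          _ ≤ c * m := Nat.mul_le_mul_left c hXm
      have hnatR : (r:ℝ) * (Finset.range m ∩ F.biUnion W).card ≤ (c:ℝ) * m := by
        exact_mod_cast hnat
      have hm0 : (0:ℝ) ≤ (m:ℝ) := Nat.cast_nonneg m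
      have hca : (c:ℝ) * m ≤ (r:ℝ) * ((m:ℝ) * a₂) := by
        have := mul_le_mul_of_nonneg_right hc2 hm0
        calc (c:ℝ) * m ≤ a₂ * r * m := this
          _ = (r:ℝ) * ((m:ℝ) * a₂) := by ring
      exact le_of_mul_le_mul_left (le_trans hnatR hca) hrpos
end

section
/- Let Ā = ⟨A_δ : δ ∈ Lim(ω₁)⟩ be such that each A_δ = {α_{δ,n} : n < ω} with the α_{δ,n} strictly increasing and cofinal in δ, and let ℚ = ℚ_Ā be the associated partial order. Then ℚ has ℵ₁ as a precaliber: for every family {p_i : i < ω₁} of conditions in ℚ there exists an uncountable X ⊆ ω₁ such that {p_i : i ∈ X} is centered, i.e., every finite subset of {p_i : i ∈ X} has a common extension in ℚ. -/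
open Filter Set

/-- A condition of the forcing `ℚ_Ā` (Definition 8.3): a finite partial function
`f : ω₁ → {0,1}` (coded via `Option Bool`), a finite set `u` of countable limit
ordinals, and rationals `ε_δ ∈ (0,1)` for `δ ∈ u`. -/
structure QACond where
  f : Ordinal.{0} → Option Bool
  u : Finset Ordinal.{0}
  ε : Ordinal.{0} → ℚ
  f_finite : {x | f x ≠ none}.Finite
  f_dom : ∀ x, f x ≠ none → x < omega1
  u_lim : ∀ δ ∈ u, δ ∈ limOmega1
  ε_pos : ∀ δ ∈ u, 0 < ε δ
  ε_lt_one : ∀ δ ∈ u, ε δ < 1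

open scoped Classical in
/-- The order of `ℚ_Ā`: `q` extends `p` iff `f_q ⊇ f_p`, `u_q ⊇ u_p`, `ε̄_q` extends
`ε̄_p`, and for each `δ ∈ u_p`, on the set `W` of indices `n` with `α_{δ,n}` newly in
the domain, every initial segment `W ∩ [0,N)` is either empty or carries a proportion
of `1`'s at most `1 - ε_{p,δ}`. -/
def QAle (α : Ordinal.{0} → ℕ → Ordinal.{0}) (p q : QACond) : Prop :=
  (∀ x, p.f x ≠ none → q.f x = p.f x) ∧
  p.u ⊆ q.u ∧
  (∀ δ ∈ p.u, q.ε δ = p.ε δ) ∧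
  ∀ δ ∈ p.u, ∀ N : ℕ,
    ((Finset.range N).filter (fun n => q.f (α δ n) ≠ none ∧ p.f (α δ n) = none) = ∅) ∨
    ((((Finset.range N).filter
        (fun n => q.f (α δ n) = some true ∧ p.f (α δ n) = none)).card : ℚ) ≤
      (1 - p.ε δ) *
      (((Finset.range N).filter
        (fun n => q.f (α δ n) ≠ none ∧ p.f (α δ n) = none)).card : ℚ))

/-!
Pass to an uncountable Δ-system of the supports `dom f_p ∪ u_p` on whose root all conditions
agree. Conditions that are pairwise coherent (compatible, and none putting a point of its domain
on a ladder `A_δ`, `δ ∈ u`, of another) have their union as a common extension, because every set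
`W` in the definition of the order is then empty. For `δ` in the root, coherence excludes only
countably many conditions, as `A_δ` is countable. For `δ` off the root, thin out to one condition
per closure point `θ` of a suitable function, with its non-root support between `θ` and the next
closure point. A ladder `A_δ` with `δ > θ` meets `θ` in a finite set; by pressing down, these
traces lie below one `β` for uncountably many `θ`, so they miss the blocks placed above `β`.
-/

open scoped Classical

theorem countable_Iio_iff_lt_omega1 {β : Ordinal.{0}} : (Iio β).Countable ↔ β < omega1 := by
  rw [← Cardinal.le_aleph0_iff_set_countable, Cardinal.mk_Iio_ordinal, Cardinal.lift_le_aleph0,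
    omega1, Cardinal.lt_ord, ← Cardinal.succ_aleph0, Order.lt_succ_iff]

theorem not_countable_Iio_omega1 : ¬(Iio omega1).Countable :=
  fun h => (countable_Iio_iff_lt_omega1.1 h).false

theorem omega1_pos : 0 < omega1 :=
  countable_Iio_iff_lt_omega1.1 (by simp)

theorem add_one_lt_omega1 {β : Ordinal.{0}} (hβ : β < omega1) : β + 1 < omega1 := by
  rw [omega1, Cardinal.ord_aleph] at hβ ⊢
  exact (Cardinal.isSuccLimit_omega 1).succ_lt hβ

theorem countable_Iic_of_lt_omega1 {β : Ordinal.{0}} (hβ : β < omega1) : (Iic β).Countable := by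
  rw [← Order.Iio_succ]
  exact countable_Iio_iff_lt_omega1.2 (add_one_lt_omega1 hβ)

theorem Set.Countable.exists_lt_omega1_forall_lt {T : Set Ordinal.{0}} (hT : T.Countable)
    (hT₁ : T ⊆ Iio omega1) : ∃ b < omega1, ∀ x ∈ T, x < b := by
  have := hT.to_subtype
  refine ⟨⨆ x : T, (x : Ordinal) + 1, ?_, fun x hx => ?_⟩
  · rw [omega1, Cardinal.ord_aleph]
    exact Ordinal.iSup_lt_omega_one fun x => by
      rw [← Cardinal.ord_aleph]; exact add_one_lt_omega1 (hT₁ x.2)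
  · exact (Order.lt_succ x).trans_le (Ordinal.le_iSup (fun x : T => (x : Ordinal) + 1) ⟨x, hx⟩)

theorem nonempty_of_not_countable {σ : Type*} {s : Set σ} (hs : ¬s.Countable) : s.Nonempty :=
  Set.Infinite.nonempty fun h => hs h.countable

theorem exists_not_countable_fiber {σ ι : Type*} [Countable ι] {S : Set σ} (hS : ¬S.Countable)
    (g : σ → ι) : ∃ v, ¬{i ∈ S | g i = v}.Countable := by
  by_contra! h
  refine hS ((countable_iUnion h).mono fun i hi => ?_)
  exact mem_iUnion.2 ⟨g i, hi, rfl⟩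

theorem Set.PairwiseDisjoint.countable_setOf_exists_mem {σ ι : Type*} {S : Set ι}
    {B : ι → Finset σ} (hB : S.PairwiseDisjoint B) {W : Set σ} (hW : W.Countable) :
    {i ∈ S | ∃ x ∈ B i, x ∈ W}.Countable := by
  refine (hW.biUnion fun x _ => Subsingleton.countable (s := {i ∈ S | x ∈ B i}) ?_).mono ?_
  · rintro i ⟨hi, hxi⟩ j ⟨hj, hxj⟩
    by_contra hij
    exact Finset.disjoint_left.1 (hB hi hj hij) hxi hxj
  · rintro i ⟨hi, x, hx, hxW⟩
    exact mem_biUnion hxW ⟨hi, hx⟩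

theorem exists_pairwiseDisjoint_of_countable_fibers {σ ι : Type*} {d : ι → Finset σ}
    {S : Set ι} (hS : ¬S.Countable) (hd : ∀ x, {i ∈ S | x ∈ d i}.Countable) :
    ∃ S' ⊆ S, ¬S'.Countable ∧ S'.PairwiseDisjoint d := by
  obtain ⟨m, -, hm⟩ := zorn_subset_nonempty {T | T ⊆ S ∧ T.PairwiseDisjoint d}
    (fun c hc hchain _ => ⟨⋃₀ c, ⟨sUnion_subset fun T hT => (hc hT).1,
      (pairwiseDisjoint_sUnion hchain.directedOn).2 fun T hT => (hc hT).2⟩,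
      fun _ => subset_sUnion_of_mem⟩)
    ∅ ⟨empty_subset _, pairwiseDisjoint_empty⟩
  -- A countable `m` is not maximal: only countably many `d i` meet its countable union.
  refine ⟨m, hm.1.1, fun hmc => ?_, hm.1.2⟩
  have hmeet : (⋃ x ∈ ⋃ i ∈ m, (d i : Set σ), {i ∈ S | x ∈ d i}).Countable :=
    (hmc.biUnion fun i _ => (d i).countable_toSet).biUnion fun x _ => hd x
  obtain ⟨i, hiS, hi⟩ := nonempty_of_not_countable fun h => hS (h.of_sdiff (hmeet.union hmc))
  have hfresh : ∀ j ∈ m, Disjoint (d i) (d j) := fun j hj =>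
    Finset.disjoint_left.2 fun x hxi hxj =>
      hi (Or.inl (mem_biUnion (mem_biUnion hj hxj) ⟨hiS, hxi⟩))
  have hins : insert i m ⊆ m := hm.2 ⟨insert_subset hiS hm.1.1,
    pairwiseDisjoint_insert.2 ⟨hm.1.2, fun j hj _ => hfresh j hj⟩⟩ (subset_insert _ _)
  exact hi (Or.inr (hins (mem_insert _ _)))

theorem exists_delta_system_of_card_le {σ ι : Type*} [DecidableEq σ] (n : ℕ) (d : ι → Finset σ)
    {S : Set ι} (hS : ¬S.Countable) (hd : ∀ i ∈ S, (d i).card ≤ n) :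
    ∃ S' ⊆ S, ¬S'.Countable ∧ ∃ R, S'.Pairwise fun i j => d i ∩ d j = R := by
  induction n generalizing d S with
  | zero =>
    refine ⟨S, subset_rfl, hS, ∅, fun i hi j _ _ => ?_⟩
    dsimp only
    rw [Finset.card_eq_zero.1 (Nat.le_zero.1 (hd i hi)), Finset.empty_inter]
  | succ n ih =>
    by_cases hpop : ∃ x, ¬{i ∈ S | x ∈ d i}.Countable
    · obtain ⟨x, hx⟩ := hpop
      obtain ⟨S', hS', hS'c, R, hR⟩ := ih (fun i => (d i).erase x) hx fun i hi => by
        rw [Finset.card_erase_of_mem hi.2]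
        exact Nat.sub_le_of_le_add (hd i hi.1)
      refine ⟨S', fun i hi => (hS' hi).1, hS'c, insert x R, fun i hi j hj hij => ?_⟩
      rw [← hR hi hj hij, Finset.erase_inter, Finset.inter_erase, Finset.erase_idem,
        Finset.insert_erase (Finset.mem_inter.2 ⟨(hS' hi).2, (hS' hj).2⟩)]
    · push Not at hpop
      obtain ⟨S', hS', hS'c, hdisj⟩ := exists_pairwiseDisjoint_of_countable_fibers hS hpop
      exact ⟨S', hS', hS'c, ∅, fun i hi j hj hij =>
        Finset.disjoint_iff_inter_eq_empty.1 (hdisj hi hj hij)⟩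

theorem exists_delta_system {σ ι : Type*} [DecidableEq σ] (d : ι → Finset σ) {S : Set ι}
    (hS : ¬S.Countable) :
    ∃ S' ⊆ S, ¬S'.Countable ∧ ∃ R, S'.Pairwise fun i j => d i ∩ d j = R := by
  obtain ⟨n, hn⟩ := exists_not_countable_fiber hS fun i => (d i).card
  obtain ⟨S', hS', hS'c, hR⟩ := exists_delta_system_of_card_le n d hn fun i hi => hi.2.le
  exact ⟨S', hS'.trans (sep_subset _ _), hS'c, hR⟩

theorem exists_closure_point_lt_omega1 {g : Ordinal.{0} → Ordinal.{0}}
    (hg : ∀ γ < omega1, g γ < omega1) {β : Ordinal.{0}} (hβ : β < omega1) :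
    ∃ θ < omega1, β < θ ∧ ∀ γ < θ, g γ < θ := by
  have hnext : ∀ ε < omega1, ∃ b < omega1, ∀ x ∈ insert ε (g '' Iic ε), x < b := fun ε hε =>
    (((countable_Iic_of_lt_omega1 hε).image g).insert ε).exists_lt_omega1_forall_lt <| by
      rintro _ (rfl | ⟨γ, hγ, rfl⟩)
      exacts [hε, hg γ (lt_of_le_of_lt hγ hε)]
  choose! next hnext_lt hnext using hnext
  have hseq_lt : ∀ n, next^[n] β < omega1 := fun n => by
    induction n with
    | zero => exact hβ
    | succ n ih => rw [Function.iterate_succ_apply']; exact hnext_lt _ ih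
  have hseq_succ : ∀ n, next^[n + 1] β ≤ ⨆ m, next^[m] β := fun n =>
    Ordinal.le_iSup (fun m => next^[m] β) (n + 1)
  refine ⟨⨆ n, next^[n] β, ?_, ?_, fun γ hγ => ?_⟩
  · rw [omega1, Cardinal.ord_aleph] at hseq_lt ⊢
    exact Ordinal.iSup_lt_omega_one hseq_lt
  · exact (hnext β hβ β (mem_insert _ _)).trans_le (hseq_succ 0)
  · obtain ⟨n, hn⟩ := Ordinal.lt_iSup_iff.1 hγ
    refine (hnext _ (hseq_lt n) _ (mem_insert_of_mem _ ⟨γ, hn.le, rfl⟩)).trans_le ?_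
    rw [← Function.iterate_succ_apply' next]
    exact hseq_succ n

theorem exists_not_countable_setOf_lt_of_regressive {g f : Ordinal.{0} → Ordinal.{0}}
    (hg : ∀ γ < omega1, g γ < omega1)
    (hf : ∀ θ < omega1, 0 < θ → (∀ γ < θ, g γ < θ) → f θ < θ) :
    ∃ β < omega1, ¬{θ | θ < omega1 ∧ (∀ γ < θ, g γ < θ) ∧ f θ < β}.Countable := by
  by_contra! h
  choose! F hF_lt hF using fun β hβ =>
    (h β hβ).exists_lt_omega1_forall_lt fun θ (hθ : θ < omega1 ∧ _) => hθ.1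
  obtain ⟨θ, hθ, hθ_pos, hθ_closed⟩ :=
    exists_closure_point_lt_omega1 (g := fun γ => max (g γ) (F (γ + 1)))
    (fun γ hγ => max_lt (hg γ hγ) (hF_lt _ (add_one_lt_omega1 hγ))) omega1_pos
  have hclosed : ∀ γ < θ, g γ < θ := fun γ hγ => (le_max_left _ _).trans_lt (hθ_closed γ hγ)
  have hfθ := hf θ hθ hθ_pos hclosed
  have hθF := hF (f θ + 1) (add_one_lt_omega1 (hfθ.trans hθ)) θ ⟨hθ, hclosed, lt_add_one _⟩
  exact (hθF.trans ((le_max_right _ _).trans_lt (hθ_closed _ hfθ))).false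

/-- The union of the finite sets `A_δ ∩ θ`, `δ ∈ D`. -/
noncomputable def ladderTrace (α : Ordinal.{0} → ℕ → Ordinal.{0}) (D : Finset Ordinal.{0})
    (θ : Ordinal.{0}) : Finset Ordinal.{0} :=
  D.biUnion fun δ => (Finset.range (sInf {n | θ ≤ α δ n})).image (α δ)

theorem lt_of_mem_ladderTrace {α : Ordinal.{0} → ℕ → Ordinal.{0}} {D : Finset Ordinal.{0}}
    {θ x : Ordinal.{0}} (hx : x ∈ ladderTrace α D θ) : x < θ := by
  simp only [ladderTrace, Finset.mem_biUnion, Finset.mem_image, Finset.mem_range] at hx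
  obtain ⟨δ, -, n, hn, rfl⟩ := hx
  exact lt_of_not_ge (Nat.notMem_of_lt_sInf hn)

theorem mem_ladderTrace {L : Set Ordinal.{0}} {α : Ordinal.{0} → ℕ → Ordinal.{0}}
    (hα : GoodSeq L α) {D : Finset Ordinal.{0}} {δ θ : Ordinal.{0}} (hδ : δ ∈ D) (hδL : δ ∈ L)
    (hθ : θ < δ) {n : ℕ} (hn : α δ n < θ) : α δ n ∈ ladderTrace α D θ := by
  obtain ⟨hmono, -, hcof⟩ := hα δ hδL
  have hne : {m | θ ≤ α δ m}.Nonempty := let ⟨m, hm⟩ := hcof θ hθ; ⟨m, hm.le⟩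
  refine Finset.mem_biUnion.2 ⟨δ, hδ, Finset.mem_image_of_mem _ (Finset.mem_range.2 ?_)⟩
  by_contra! h
  exact ((Nat.sInf_mem hne).trans (hmono.monotone h)).not_gt hn

theorem Set.PairwiseDisjoint.exists_mem_above {S : Set Ordinal.{0}}
    {B : Ordinal.{0} → Finset Ordinal.{0}} (hdisj : S.PairwiseDisjoint B) (hSc : ¬S.Countable)
    {γ : Ordinal.{0}} (hγ : γ < omega1) : ∃ i ∈ S, γ ≤ i ∧ ∀ x ∈ B i, γ < x := by
  have hsmall : (Iio γ ∪ {i ∈ S | ∃ x ∈ B i, x ∈ Iic γ}).Countable :=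
    (countable_Iio_iff_lt_omega1.2 hγ).union
      (hdisj.countable_setOf_exists_mem (countable_Iic_of_lt_omega1 hγ))
  obtain ⟨i, hiS, hi⟩ := nonempty_of_not_countable fun h => hSc (h.of_sdiff hsmall)
  simp only [mem_union, mem_Iio, mem_ofPred_eq, mem_Iic, not_or, not_lt, not_and,
    not_exists, not_le] at hi
  exact ⟨i, hiS, hi.1, hi.2 hiS⟩

theorem exists_not_countable_avoiding_ladders {L : Set Ordinal.{0}}
    {α : Ordinal.{0} → ℕ → Ordinal.{0}} (hα : GoodSeq L α) {S : Set Ordinal.{0}}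
    (hS : S ⊆ Iio omega1) (hSc : ¬S.Countable) {B : Ordinal.{0} → Finset Ordinal.{0}}
    (hB : ∀ i ∈ S, ∀ x ∈ B i, x < omega1) (hdisj : S.PairwiseDisjoint B) :
    ∃ X ⊆ S, ¬X.Countable ∧
      X.Pairwise fun i j => ∀ δ ∈ B i, δ ∈ L → Disjoint (range (α δ)) ↑(B j) := by
  choose! s hsS hs_ge hs_gt using fun γ (hγ : γ < omega1) => hdisj.exists_mem_above hSc hγ
  -- Closure points `θ` of `g` separate the blocks: `B (s γ)` lies below `θ` for `γ < θ`,
  -- while `B (s θ)` lies above `θ`.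
  set g : Ordinal.{0} → Ordinal.{0} := fun γ => max (s γ) ((B (s γ)).sup id) + 1
  have hg : ∀ γ < omega1, g γ < omega1 := fun γ hγ => add_one_lt_omega1 <|
    max_lt (hS (hsS γ hγ)) ((Finset.sup_lt_iff omega1_pos).2 fun x hx => hB _ (hsS γ hγ) x hx)
  have hs_lt : ∀ {γ θ}, (∀ γ' < θ, g γ' < θ) → γ < θ → s γ < θ := fun hθ hγ =>
    ((le_max_left _ _).trans_lt (lt_add_one _)).trans (hθ _ hγ)
  have hB_lt : ∀ {γ θ}, (∀ γ' < θ, g γ' < θ) → γ < θ → ∀ x ∈ B (s γ), x < θ :=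
    fun hθ hγ x hx => ((Finset.le_sup (f := id) hx).trans ((le_max_right _ _).trans
      (lt_add_one _).le)).trans_lt (hθ _ hγ)
  obtain ⟨β, hβ, hβc⟩ := exists_not_countable_setOf_lt_of_regressive hg
    (f := fun θ => (ladderTrace α (B (s θ)) θ).sup id)
    fun θ _ hθ _ => (Finset.sup_lt_iff hθ).2 fun x hx => lt_of_mem_ladderTrace hx
  set Θ := {θ | θ < omega1 ∧ (∀ γ < θ, g γ < θ) ∧ (ladderTrace α (B (s θ)) θ).sup id < β} \
    Iic β
  have hΘc : ¬Θ.Countable := fun h => hβc (h.of_sdiff (countable_Iic_of_lt_omega1 hβ))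
  have hmono : StrictMonoOn s Θ := fun θ _ θ' hθ' hlt =>
    (hs_lt hθ'.1.2.1 hlt).trans_le (hs_ge θ' hθ'.1.1)
  refine ⟨s '' Θ, image_subset_iff.2 fun θ hθ => hsS θ hθ.1.1,
    fun h => hΘc ((mapsTo_image s Θ).countable_of_injOn hmono.injOn h), ?_⟩
  rintro _ ⟨θ, hθ, rfl⟩ _ ⟨θ', hθ', rfl⟩ hne δ hδ hδL
  rw [Set.disjoint_left]
  rintro _ ⟨n, rfl⟩ hn
  rcases lt_or_gt_of_ne fun h => hne (congrArg s h) with hlt | hlt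
  · exact ((((hα δ hδL).2.1 n).trans (hB_lt hθ'.1.2.1 hlt δ hδ)).trans
      (hs_gt θ' hθ'.1.1 _ hn)).false
  · have htrace := mem_ladderTrace hα hδ hδL (hs_gt θ hθ.1.1 δ hδ) (hB_lt hθ.1.2.1 hlt _ hn)
    exact ((((Finset.le_sup (f := id) htrace).trans_lt hθ.1.2.2).trans
      (lt_of_not_ge hθ'.2)).trans (hs_gt θ' hθ'.1.1 _ hn)).false

namespace QACond

noncomputable def support (p : QACond) : Finset Ordinal.{0} := p.f_finite.toFinset ∪ p.u

theorem mem_support {p : QACond} {x : Ordinal.{0}} : x ∈ p.support ↔ p.f x ≠ none ∨ x ∈ p.u := by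
  simp [support]

theorem lt_omega1_of_mem_support {p : QACond} {x : Ordinal.{0}} (hx : x ∈ p.support) :
    x < omega1 :=
  (mem_support.1 hx).elim (p.f_dom x) fun h => (p.u_lim x h).1

def AgreeOn (R : Finset Ordinal.{0}) (p q : QACond) : Prop :=
  ∀ x ∈ R, p.f x = q.f x ∧ (x ∈ p.u ↔ x ∈ q.u) ∧ p.ε x = q.ε x

/-- The union of pairwise coherent conditions extends each of them with every `W` empty. -/
def Coherent (α : Ordinal.{0} → ℕ → Ordinal.{0}) (p q : QACond) : Prop :=
  (∀ x, p.f x ≠ none → q.f x ≠ none → p.f x = q.f x) ∧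
  (∀ δ ∈ p.u, δ ∈ q.u → p.ε δ = q.ε δ) ∧
  ∀ δ ∈ p.u, ∀ n, q.f (α δ n) ≠ none → p.f (α δ n) ≠ none

theorem coherent_of_agreeOn {α : Ordinal.{0} → ℕ → Ordinal.{0}} {R : Finset Ordinal.{0}}
    {p q : QACond} (hpq : p.support ∩ q.support = R) (hR : AgreeOn R p q)
    (hladder : ∀ δ ∈ p.u, Disjoint (range (α δ)) ↑(q.support \ R)) : Coherent α p q := by
  have hroot : ∀ {x}, x ∈ p.support → x ∈ q.support → x ∈ R := fun hp hq =>
    hpq ▸ Finset.mem_inter.2 ⟨hp, hq⟩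
  refine ⟨fun x hp hq => (hR x (hroot (mem_support.2 (.inl hp)) (mem_support.2 (.inl hq)))).1,
    fun δ hp hq => (hR δ (hroot (mem_support.2 (.inr hp)) (mem_support.2 (.inr hq)))).2.2,
    fun δ hδ n hq => ?_⟩
  by_cases hn : α δ n ∈ R
  · exact (hR _ hn).1 ▸ hq
  · exact absurd (Finset.mem_coe.2 (Finset.mem_sdiff.2 ⟨mem_support.2 (.inl hq), hn⟩))
      (Set.disjoint_left.1 (hladder δ hδ) ⟨n, rfl⟩)

noncomputable def glue (F : Finset Ordinal.{0}) (p : Ordinal.{0} → QACond) : QACond where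
  f x := if h : ∃ i ∈ F, (p i).f x ≠ none then (p h.choose).f x else none
  u := F.biUnion fun i => (p i).u
  ε δ := if h : ∃ i ∈ F, δ ∈ (p i).u then (p h.choose).ε δ else 0
  f_finite := by
    refine (F.finite_toSet.biUnion fun i _ => (p i).f_finite).subset fun x hx => ?_
    by_cases h : ∃ i ∈ F, (p i).f x ≠ none
    · obtain ⟨i, hi, hx⟩ := h
      exact mem_biUnion hi hx
    · exact absurd (dif_neg h) hx
  f_dom x hx := by
    by_cases h : ∃ i ∈ F, (p i).f x ≠ none
    · rw [dif_pos h] at hx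
      exact (p _).f_dom x hx
    · exact absurd (dif_neg h) hx
  u_lim δ hδ := by
    obtain ⟨i, -, hi⟩ := Finset.mem_biUnion.1 hδ
    exact (p i).u_lim δ hi
  ε_pos δ hδ := by
    rw [dif_pos (Finset.mem_biUnion.1 hδ)]
    exact (p _).ε_pos δ (Finset.mem_biUnion.1 hδ).choose_spec.2
  ε_lt_one δ hδ := by
    rw [dif_pos (Finset.mem_biUnion.1 hδ)]
    exact (p _).ε_lt_one δ (Finset.mem_biUnion.1 hδ).choose_spec.2

theorem exists_of_glue_f_ne_none {F : Finset Ordinal.{0}} {p : Ordinal.{0} → QACond}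
    {x : Ordinal.{0}} (hx : (glue F p).f x ≠ none) : ∃ i ∈ F, (p i).f x ≠ none := by
  by_contra h
  exact hx (dif_neg h)

variable {α : Ordinal.{0} → ℕ → Ordinal.{0}} {F : Finset Ordinal.{0}} {p : Ordinal.{0} → QACond}

theorem glue_f (hF : (F : Set Ordinal.{0}).Pairwise fun i j => Coherent α (p i) (p j))
    {i : Ordinal.{0}} (hi : i ∈ F) {x : Ordinal.{0}} (hx : (p i).f x ≠ none) :
    (glue F p).f x = (p i).f x := by
  have h : ∃ j ∈ F, (p j).f x ≠ none := ⟨i, hi, hx⟩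
  change (if h : ∃ j ∈ F, (p j).f x ≠ none then (p h.choose).f x else none) = _
  rw [dif_pos h]
  obtain ⟨hjF, hjx⟩ := h.choose_spec
  by_cases hji : h.choose = i
  · rw [hji]
  · exact (hF hjF hi hji).1 x hjx hx

theorem glue_ε (hF : (F : Set Ordinal.{0}).Pairwise fun i j => Coherent α (p i) (p j))
    {i : Ordinal.{0}} (hi : i ∈ F) {δ : Ordinal.{0}} (hδ : δ ∈ (p i).u) :
    (glue F p).ε δ = (p i).ε δ := by
  have h : ∃ j ∈ F, δ ∈ (p j).u := ⟨i, hi, hδ⟩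
  change (if h : ∃ j ∈ F, δ ∈ (p j).u then (p h.choose).ε δ else 0) = _
  rw [dif_pos h]
  obtain ⟨hjF, hjδ⟩ := h.choose_spec
  by_cases hji : h.choose = i
  · rw [hji]
  · exact (hF hjF hi hji).2.1 δ hjδ hδ

theorem le_glue (hF : (F : Set Ordinal.{0}).Pairwise fun i j => Coherent α (p i) (p j))
    {i : Ordinal.{0}} (hi : i ∈ F) : QAle α (p i) (glue F p) := by
  refine ⟨fun x => glue_f hF hi, Finset.subset_biUnion_of_mem (fun j => (p j).u) hi,
    fun δ => glue_ε hF hi, fun δ hδ N => .inl (Finset.filter_eq_empty_iff.2 ?_)⟩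
  rintro n - ⟨hglue, hpi⟩
  obtain ⟨j, hj, hjn⟩ := exists_of_glue_f_ne_none hglue
  have hji : i ≠ j := by rintro rfl; exact hjn hpi
  exact (hF hi hj hji).2.2 δ hδ n hjn hpi

end QACond

theorem exists_delta_system_agreeOn (p : Ordinal.{0} → QACond) :
    ∃ S ⊆ Iio omega1, ¬S.Countable ∧ ∃ R,
      S.Pairwise (fun i j => (p i).support ∩ (p j).support = R) ∧
        ∀ i ∈ S, ∀ j ∈ S, QACond.AgreeOn R (p i) (p j) := by
  obtain ⟨S, hS, hSc, R, hR⟩ :=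
    exists_delta_system (fun i => (p i).support) not_countable_Iio_omega1
  obtain ⟨v, hv⟩ := exists_not_countable_fiber hSc fun i (x : R) =>
    ((p i).f x, decide (↑x ∈ (p i).u), (p i).ε x)
  refine ⟨_, fun i hi => hS hi.1, hv, R, hR.mono (sep_subset _ _), fun i hi j hj x hx => ?_⟩
  have := congrFun (hi.2.trans hj.2.symm) ⟨x, hx⟩
  simp only [Prod.mk.injEq, decide_eq_decide] at this
  exact this

theorem exists_not_countable_pairwise_coherent {α : Ordinal.{0} → ℕ → Ordinal.{0}}
    (hα : GoodSeq limOmega1 α) (p : Ordinal.{0} → QACond) :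
    ∃ X ⊆ Iio omega1, ¬X.Countable ∧ X.Pairwise fun i j => (p i).Coherent α (p j) := by
  obtain ⟨S, hS, hSc, R, hΔ, hagree⟩ := exists_delta_system_agreeOn p
  obtain ⟨i₀, hi₀⟩ := nonempty_of_not_countable hSc
  set B := fun i => (p i).support \ R
  have hdisj : S.PairwiseDisjoint B := fun i hi j hj hij => by
    refine Finset.disjoint_left.2 fun x hxi hxj => (Finset.mem_sdiff.1 hxi).2 ?_
    exact hΔ hi hj hij ▸ Finset.mem_inter.2 ⟨(Finset.mem_sdiff.1 hxi).1, (Finset.mem_sdiff.1 hxj).1⟩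
  set W := ⋃ δ ∈ (R.filter (· ∈ (p i₀).u) : Set Ordinal.{0}), range (α δ)
  have hW : W.Countable := (Finset.countable_toSet _).biUnion fun _ _ => countable_range _
  obtain ⟨X, hX, hXc, hladder⟩ := exists_not_countable_avoiding_ladders hα
    (sdiff_subset.trans hS) (fun h => hSc (h.of_sdiff (hdisj.countable_setOf_exists_mem hW)))
    (B := B) (fun i _ x hx => QACond.lt_omega1_of_mem_support (Finset.mem_sdiff.1 hx).1)
    (hdisj.subset sdiff_subset)
  refine ⟨X, hX.trans (sdiff_subset.trans hS), hXc, fun i hi j hj hij =>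
    QACond.coherent_of_agreeOn (hΔ (hX hi).1 (hX hj).1 hij) (hagree i (hX hi).1 j (hX hj).1)
      fun δ hδ => ?_⟩
  by_cases hδR : δ ∈ R
  · rw [Set.disjoint_left]
    rintro _ ⟨n, rfl⟩ hn
    have hδ₀ : δ ∈ (p i₀).u := ((hagree i (hX hi).1 i₀ hi₀ δ hδR).2.1).1 hδ
    exact (hX hj).2 ⟨(hX hj).1, _, hn, mem_biUnion (Finset.mem_filter.2 ⟨hδR, hδ₀⟩) ⟨n, rfl⟩⟩
  · exact hladder hi hj hij δ (Finset.mem_sdiff.2 ⟨QACond.mem_support.2 (.inr hδ), hδR⟩)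
      ((p i).u_lim δ hδ)

/-- Claim 8.4: the forcing `ℚ_Ā` has `ℵ₁` as a precaliber: any `ω₁`-indexed family of
conditions has an uncountable centered subfamily. -/
theorem QA_precaliber (α : Ordinal.{0} → ℕ → Ordinal.{0}) (hα : GoodSeq limOmega1 α)
    (p : Ordinal.{0} → QACond) :
    ∃ X : Set Ordinal.{0}, X ⊆ Set.Iio omega1 ∧ ¬ X.Countable ∧
      ∀ F : Finset Ordinal.{0}, ↑F ⊆ X → ∃ q : QACond, ∀ i ∈ F, QAle α (p i) q := by
  obtain ⟨X, hX, hXc, hcoh⟩ := exists_not_countable_pairwise_coherent hα p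
  exact ⟨X, hX, hXc, fun F hF => ⟨QACond.glue F p, fun i hi => QACond.le_glue (hcoh.mono hF) hi⟩⟩
end
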